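/- Let X = ({0} × [−1,1]) ∪ {(t, sin(1/t)) : t ∈ (0,1]} ⊆ ℝ² be the topologist's sine curve and let x₀ = (0, −1), an endpoint of the limit segment {0} × [−1,1]. Then the pointed compactum (X, x₀) is not a PAANR (even though X itself is an AANR). -/

import Mathlib

open Topology

universe u v

/-- A compactum `X` is an *approximative absolute neighborhood retract* (AANR). -/
def IsAANR (X : Type u) [TopologicalSpace X] : Prop :=
  ∀ (Y : Type v) [MetricSpace Y] [CompactSpace Y] (θ : X → Y),
    IsEmbedding θ →
    ∀ ε > (0 : ℝ), ∃ δ > (0 : ℝ), ∃ r : Y → X,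
      ContinuousOn r {y | Metric.infDist y (Set.range θ) ≤ δ} ∧
      ∀ x : X, dist (θ (r (θ x))) (θ x) ≤ ε

/-- A pointed compactum `(X, x₀)` is a *pointed approximative absolute neighborhood
retract* (PAANR) if for every compact metric space `Y`, every topological embedding
`θ : X → Y`, and every `ε > 0`, there exist `δ > 0` and a continuous map
`r : U_δ → X` (where `U_δ = {y | dist (y, θ(X)) ≤ δ}`) with `r (θ x₀) = x₀` which moves
the points of `θ(X)` by at most `ε`. -/
def IsPAANR (X : Type u) [TopologicalSpace X] (x₀ : X) : Prop :=
  ∀ (Y : Type v) [MetricSpace Y] [CompactSpace Y] (θ : X → Y),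
    IsEmbedding θ →
    ∀ ε > (0 : ℝ), ∃ δ > (0 : ℝ), ∃ r : Y → X,
      ContinuousOn r {y | Metric.infDist y (Set.range θ) ≤ δ} ∧
      r (θ x₀) = x₀ ∧
      ∀ x : X, dist (θ (r (θ x))) (θ x) ≤ ε

/-- The topologist's sine curve
`({0} × [−1,1]) ∪ {(t, sin(1/t)) : t ∈ (0,1]} ⊆ ℝ²`. -/
noncomputable def sineCurve : Set (ℝ × ℝ) :=
  {p : ℝ × ℝ | p.1 = 0 ∧ p.2 ∈ Set.Icc (-1 : ℝ) 1} ∪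
    {p : ℝ × ℝ | ∃ t : ℝ, 0 < t ∧ t ≤ 1 ∧ p = (t, Real.sin (1 / t))}

/-- The endpoint `x₀ = (0, −1)` of the limit segment `{0} × [−1,1]` of the topologist's
sine curve. -/
noncomputable def sineCurveLimitPoint : ↥sineCurve :=
  ⟨((0 : ℝ), (-1 : ℝ)), Or.inl ⟨rfl, by norm_num⟩⟩

/-!
Suppose `r` is a map from a `δ`-neighbourhood of `X` in the box `[0,1] × [-1,1]` that fixes
`x₀ = (0,-1)` and moves the points of `X` by at most `1/2`. The path that runs from `x₀` along
the line `y = -1` to a trough `(c, -1)` of the curve with `c < δ`, and then along the curve to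
`(1, sin 1)`, stays `δ`-close to `X`, so `r` carries it to a path in `X` from the limit segment to
a point of positive abscissa. There is no such path: arbitrarily close to the segment the curve
oscillates between heights `1` and `-1`, so the set of times at which a path lies on the segment
is open as well as closed.

Without a base point the obstruction disappears: pushing each point of `X` to the right, onto
the curve at the same height and at abscissa at most `1/n`, is `1/n`-close to the identity and
factors through an arc, and maps into an arc extend over any ambient space by Tietze.
-/

open Set Real Metric

theorem IsPAANR.exists_path_shadow {X : Type u} [TopologicalSpace X] {x₀ : X}
    (H : IsPAANR.{u, v} X x₀) {Y : Type v} [MetricSpace Y] [CompactSpace Y] {θ : X → Y}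
    (hθ : IsEmbedding θ) {ε : ℝ} (hε : 0 < ε) :
    ∃ δ > 0, ∀ γ : ℝ → Y, Continuous γ → γ 0 = θ x₀ → (∀ s, ∃ x, dist (γ s) (θ x) ≤ δ) →
      ∃ h : ℝ → X, Continuous h ∧ h 0 = x₀ ∧ ∀ x, γ 1 = θ x → dist (θ (h 1)) (θ x) ≤ ε := by
  obtain ⟨δ, hδ, r, hr, hr₀, hrε⟩ := H Y θ hθ ε hε
  refine ⟨δ, hδ, fun γ hγ hγ₀ hnear => ⟨r ∘ γ, hr.comp_continuous hγ fun s => ?_,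
    by simp [hγ₀, hr₀], fun x hx => by simpa [hx] using hrε x⟩⟩
  obtain ⟨x, hx⟩ := hnear s
  exact (infDist_le_dist_of_mem (mem_range_self x)).trans hx

theorem isAANR_of_forall_approx_through_real {X : Type u} [MetricSpace X] [CompactSpace X]
    (h : ∀ η > 0, ∃ φ : X → ℝ, ∃ ψ : ℝ → X,
      Continuous φ ∧ Continuous ψ ∧ ∀ x, dist (ψ (φ x)) x < η) :
    IsAANR.{u, v} X := by
  intro Y _ _ θ hθ ε hε
  obtain ⟨η, hη, hθη⟩ := Metric.uniformContinuous_iff.1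
    (CompactSpace.uniformContinuous_of_continuous hθ.continuous) ε hε
  obtain ⟨φ, ψ, hφ, hψ, hφψ⟩ := h η hη
  obtain ⟨g, hg⟩ := ContinuousMap.exists_extension'
    (hθ.continuous.isClosedEmbedding hθ.injective) ⟨φ, hφ⟩
  refine ⟨1, one_pos, ψ ∘ g, (hψ.comp g.continuous).continuousOn, fun x => ?_⟩
  have hgx : g (θ x) = φ x := congrFun hg x
  simpa [hgx] using (hθη (hφψ x)).le

section SinInvRoot

/-- The solution `t` of `sin (1 / t) = y` with `1 / t ∈ [2πn - π/2, 2πn + π/2]`. -/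
noncomputable def sinInvRoot (n : ℕ) (y : ℝ) : ℝ := (2 * π * n + arcsin y)⁻¹

variable {n : ℕ} {y : ℝ}

lemma natCast_le_two_pi_mul_add_arcsin (hn : 0 < n) : (n : ℝ) ≤ 2 * π * n + arcsin y := by
  have hn' : (1 : ℝ) ≤ n := by exact_mod_cast hn
  nlinarith [neg_pi_div_two_le_arcsin y, pi_gt_three]

lemma sinInvRoot_pos (hn : 0 < n) : 0 < sinInvRoot n y :=
  inv_pos.2 <| (Nat.cast_pos.2 hn).trans_le (natCast_le_two_pi_mul_add_arcsin hn)

lemma sinInvRoot_le_inv (hn : 0 < n) : sinInvRoot n y ≤ (n : ℝ)⁻¹ :=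
  inv_anti₀ (Nat.cast_pos.2 hn) (natCast_le_two_pi_mul_add_arcsin hn)

lemma inv_le_sinInvRoot (hn : 0 < n) : (2 * π * n + π / 2)⁻¹ ≤ sinInvRoot n y :=
  inv_anti₀ ((Nat.cast_pos.2 hn).trans_le (natCast_le_two_pi_mul_add_arcsin hn))
    (by linarith [arcsin_le_pi_div_two y])

lemma continuous_sinInvRoot (hn : 0 < n) : Continuous (sinInvRoot n) :=
  (continuous_const.add continuous_arcsin).inv₀ fun _ => (sinInvRoot_pos hn).ne' ∘ inv_eq_zero.2

lemma sin_one_div_sinInvRoot (hy : y ∈ Icc (-1 : ℝ) 1) : sin (1 / sinInvRoot n y) = y := by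
  rw [sinInvRoot, one_div, inv_inv, add_comm, mul_right_comm, mul_comm 2 (n : ℝ), mul_assoc,
    sin_add_nat_mul_two_pi, sin_arcsin hy.1 hy.2]

lemma exists_sin_one_div_eq (hy : y ∈ Icc (-1 : ℝ) 1) {c : ℝ} (hc : 0 < c) :
    ∃ t ∈ Ioo 0 c, sin (1 / t) = y := by
  obtain ⟨n, hn⟩ := exists_nat_gt c⁻¹
  have hn0 : 0 < n := Nat.cast_pos.1 ((inv_pos.2 hc).trans hn)
  refine ⟨sinInvRoot n y, ⟨sinInvRoot_pos hn0, ?_⟩, sin_one_div_sinInvRoot hy⟩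
  exact (sinInvRoot_le_inv hn0).trans_lt (inv_lt_of_inv_lt₀ hc hn)

end SinInvRoot

section SineCurve

lemma sineCurve_eq :
    sineCurve = Icc ((0 : ℝ), (-1 : ℝ)) (1, 1) \ {p | 0 < p.1 ∧ p.2 ≠ sin (1 / p.1)} := by
  ext ⟨x, y⟩
  simp only [sineCurve, mem_union, mem_ofPred_eq, mem_sdiff, mem_Icc, Prod.mk_le_mk, Prod.mk.injEq,
    not_and, not_not]
  constructor
  · rintro (⟨rfl, hy⟩ | ⟨t, ht0, ht1, rfl, rfl⟩)
    · exact ⟨⟨⟨le_rfl, hy.1⟩, zero_le_one, hy.2⟩, fun h => absurd h (lt_irrefl 0)⟩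
    · exact ⟨⟨⟨ht0.le, neg_one_le_sin _⟩, ht1, sin_le_one _⟩, fun _ => rfl⟩
  · rintro ⟨⟨⟨hx0, hy0⟩, hx1, hy1⟩, hxy⟩
    rcases hx0.eq_or_lt with rfl | hx0
    · exact Or.inl ⟨rfl, hy0, hy1⟩
    · exact Or.inr ⟨x, hx0, hx1, rfl, hxy hx0⟩

lemma isOpen_setOf_snd_ne_sin_one_div_fst :
    IsOpen {p : ℝ × ℝ | 0 < p.1 ∧ p.2 ≠ sin (1 / p.1)} := by
  have hcont : ContinuousOn (fun p : ℝ × ℝ => sin (1 / p.1)) {p | 0 < p.1} :=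
    continuous_sin.comp_continuousOn <|
      continuousOn_const.div continuous_fst.continuousOn fun _ hp => ne_of_gt hp
  convert (continuous_snd.continuousOn.sub hcont).isOpen_inter_preimage
    (isOpen_lt continuous_const continuous_fst) (isOpen_compl_singleton (x := 0)) using 1
  ext p
  simp [sub_eq_zero]

lemma isCompact_sineCurve : IsCompact sineCurve := by
  rw [sineCurve_eq]
  exact isCompact_Icc.diff isOpen_setOf_snd_ne_sin_one_div_fst

lemma sineCurve_subset_Icc : sineCurve ⊆ Icc ((0 : ℝ), (-1 : ℝ)) (1, 1) :=
  sineCurve_eq.trans_subset sdiff_subset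

variable {p : ℝ × ℝ}

lemma fst_nonneg_of_mem_sineCurve (hp : p ∈ sineCurve) : 0 ≤ p.1 :=
  (sineCurve_subset_Icc hp).1.1

lemma fst_le_one_of_mem_sineCurve (hp : p ∈ sineCurve) : p.1 ≤ 1 :=
  (sineCurve_subset_Icc hp).2.1

lemma snd_mem_Icc_of_mem_sineCurve (hp : p ∈ sineCurve) : p.2 ∈ Icc (-1 : ℝ) 1 :=
  ⟨(sineCurve_subset_Icc hp).1.2, (sineCurve_subset_Icc hp).2.2⟩

lemma snd_eq_sin_one_div_fst (hp : p ∈ sineCurve) (h : 0 < p.1) : p.2 = sin (1 / p.1) := by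
  rw [sineCurve_eq] at hp
  exact not_not.1 fun hne => hp.2 ⟨h, hne⟩

lemma mk_sin_one_div_mem_sineCurve {t : ℝ} (ht : t ∈ Ioc 0 1) : (t, sin (1 / t)) ∈ sineCurve :=
  Or.inr ⟨t, ht.1, ht.2, rfl⟩

end SineCurve

section Path

variable {h : ℝ → ℝ × ℝ}

lemma exists_mem_uIcc_snd_eq (hc : Continuous h) (hmem : ∀ s, h s ∈ sineCurve) {a b : ℝ}
    (ha : (h a).1 = 0) (hb : 0 < (h b).1) {y : ℝ} (hy : y ∈ Icc (-1 : ℝ) 1) : ∃ τ ∈ uIcc a b, (h τ).2 = y := by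
  obtain ⟨t, ht, hty⟩ := exists_sin_one_div_eq hy hb
  have ht' : t ∈ uIcc (h a).1 (h b).1 := by
    rw [ha]
    exact mem_uIcc_of_le ht.1.le ht.2.le
  obtain ⟨τ, hτ, hτt⟩ := intermediate_value_uIcc (continuous_fst.comp hc).continuousOn ht'
  refine ⟨τ, hτ, ?_⟩
  have hτt : (h τ).1 = t := hτt
  rw [snd_eq_sin_one_div_fst (hmem τ) (hτt ▸ ht.1), hτt, hty]

lemma fst_eq_zero_of_continuous (hc : Continuous h) (hmem : ∀ s, h s ∈ sineCurve) {s₀ : ℝ}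
    (h₀ : (h s₀).1 = 0) (s : ℝ) : (h s).1 = 0 := by
  suffices hclopen : IsClopen {s | (h s).1 = 0} from
    eq_univ_iff_forall.1 (hclopen.eq_univ ⟨s₀, h₀⟩) s
  refine ⟨isClosed_eq (continuous_fst.comp hc) continuous_const, isOpen_iff.2 fun c hc0 => ?_⟩
  obtain ⟨η, hη, hball⟩ := Metric.continuous_iff.1 hc c 1 one_pos
  refine ⟨η, hη, fun s hs => by_contra fun hne => ?_⟩
  have hpos : 0 < (h s).1 := (fst_nonneg_of_mem_sineCurve (hmem s)).lt_of_ne' hne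
  -- continuity at `c` keeps `(h ·).2` within `1` of `(h c).2`, yet it attains both `1` and `-1`
  have hnear : ∀ y ∈ Icc (-1 : ℝ) 1, |y - (h c).2| < 1 := fun y hy => by
    obtain ⟨τ, hτ, rfl⟩ := exists_mem_uIcc_snd_eq hc hmem hc0 hpos hy
    have hτc : dist τ c < η := by
      rw [mem_ball, Real.dist_eq] at hs
      rw [Real.dist_eq]
      exact (abs_sub_left_of_mem_uIcc hτ).trans_lt hs
    have hτc := hball τ hτc
    rw [Prod.dist_eq, max_lt_iff, Real.dist_eq] at hτc
    exact hτc.2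
  have h₁ := abs_lt.1 (hnear 1 (by norm_num))
  have h₂ := abs_lt.1 (hnear (-1) (by norm_num))
  linarith [h₁.2, h₂.1]

end Path

lemma exists_path_near_sineCurve {δ : ℝ} (hδ : 0 < δ) :
    ∃ γ : ℝ → ℝ × ℝ, Continuous γ ∧ γ 0 = (0, -1) ∧ γ 1 = (1, sin (1 / 1)) ∧
      ∀ s, γ s ∈ Icc ((0 : ℝ), (-1 : ℝ)) (1, 1) ∧ ∃ q ∈ sineCurve, dist (γ s) q ≤ δ := by
  -- run along the bottom line `y = -1` up to a trough `c ≤ δ`, then along the curve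
  obtain ⟨c, ⟨hc0, hcδ⟩, hc⟩ :=
    exists_sin_one_div_eq (y := -1) (by norm_num) (lt_min hδ one_pos)
  let u : ℝ → ℝ := fun s => projIcc 0 1 zero_le_one s
  have hu : Continuous u := continuous_subtype_val.comp continuous_projIcc
  have hu01 (s : ℝ) : u s ∈ Icc (0 : ℝ) 1 := (projIcc 0 1 zero_le_one s).2
  have hc1 : c < 1 := hcδ.trans_le (min_le_right _ _)
  refine ⟨fun s => (u s, sin (1 / max (u s) c)), ?_, ?_, ?_, fun s => ⟨?_, ?_⟩⟩
  · exact hu.prodMk <| continuous_sin.comp <| continuous_const.div (hu.max continuous_const)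
      fun s => (hc0.trans_le (le_max_right _ _)).ne'
  · simpa [u, max_eq_right hc0.le] using hc
  · simp [u, max_eq_left hc1.le]
  · exact ⟨⟨(hu01 s).1, neg_one_le_sin _⟩, (hu01 s).2, sin_le_one _⟩
  · rcases le_or_gt c (u s) with hcu | huc
    · refine ⟨_, mk_sin_one_div_mem_sineCurve ⟨hc0.trans_le hcu, (hu01 s).2⟩, ?_⟩
      beta_reduce
      rw [max_eq_left hcu, dist_self]
      exact hδ.le
    · refine ⟨(0, -1), Or.inl ⟨rfl, by norm_num⟩, ?_⟩
      beta_reduce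
      rw [max_eq_right huc.le, hc, Prod.dist_eq, dist_self, Real.dist_eq, sub_zero,
        abs_of_nonneg (hu01 s).1]
      exact max_le (huc.le.trans (hcδ.le.trans (min_le_left _ _))) hδ.le

theorem sineCurve_not_isPAANR : ¬ IsPAANR.{0, v} sineCurve sineCurveLimitPoint := by
  intro H
  have : CompactSpace (Icc ((0 : ℝ), (-1 : ℝ)) (1, 1)) :=
    isCompact_iff_compactSpace.1 isCompact_Icc
  let θ : sineCurve → ULift.{v} (Icc ((0 : ℝ), (-1 : ℝ)) (1, 1)) :=
    fun x => ULift.up ⟨x, sineCurve_subset_Icc x.2⟩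
  have hθ : Isometry θ := fun _ _ => rfl
  obtain ⟨δ, hδ, hshadow⟩ := H.exists_path_shadow hθ.isEmbedding one_half_pos
  obtain ⟨γ, hγ, hγ₀, hγ₁, hγnear⟩ := exists_path_near_sineCurve hδ
  let x₁ : sineCurve := ⟨_, mk_sin_one_div_mem_sineCurve ⟨one_pos, le_rfl⟩⟩
  obtain ⟨h, hh, hh₀, hh₁⟩ := hshadow (fun s => ULift.up ⟨γ s, (hγnear s).1⟩)
    (continuous_uliftUp.comp (hγ.subtype_mk _)) (by simp only [hγ₀]; rfl)
    fun s => let ⟨q, hq, hdq⟩ := (hγnear s).2; ⟨⟨q, hq⟩, hdq⟩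
  have hfst : (h 1 : ℝ × ℝ).1 = 0 :=
    fst_eq_zero_of_continuous (continuous_subtype_val.comp hh) (fun s => (h s).2)
      (s₀ := 0) (by simp only [Function.comp_apply, hh₀]; rfl) 1
  have hd : dist (h 1 : ℝ × ℝ) (1, sin (1 / 1)) ≤ 1 / 2 := hh₁ x₁ (by simp only [hγ₁]; rfl)
  rw [Prod.dist_eq, hfst, max_le_iff, Real.dist_eq] at hd
  norm_num at hd

lemma dist_mk_max_le_of_mem_sineCurve {p : ℝ × ℝ} (hp : p ∈ sineCurve) {s : ℝ} (hs : 0 < s)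
    (hsp : sin (1 / s) = p.2) : dist (max p.1 s, sin (1 / max p.1 s)) p ≤ s := by
  rcases le_total s p.1 with hsp₁ | hp₁s
  · rw [max_eq_left hsp₁, ← snd_eq_sin_one_div_fst hp (hs.trans_le hsp₁), dist_self]
    exact hs.le
  · rw [max_eq_right hp₁s, hsp, Prod.dist_eq, dist_self, Real.dist_eq,
      abs_of_nonneg (sub_nonneg.2 hp₁s)]
    exact max_le (by linarith [fst_nonneg_of_mem_sineCurve hp]) hs.le

theorem isAANR_sineCurve : IsAANR.{0, v} sineCurve := by
  have : CompactSpace sineCurve := isCompact_iff_compactSpace.1 isCompact_sineCurve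
  refine isAANR_of_forall_approx_through_real fun η hη => ?_
  obtain ⟨n, hn⟩ := exists_nat_gt η⁻¹
  have hn0 : 0 < n := Nat.cast_pos.1 ((inv_pos.2 hη).trans hn)
  have hroot_le_one (y : ℝ) : sinInvRoot n y ≤ 1 :=
    (sinInvRoot_le_inv hn0).trans (inv_le_one_of_one_le₀ (by exact_mod_cast hn0))
  -- `ψ` parametrizes the arc of the curve over `[a, 1]`
  set a : ℝ := (2 * π * n + π / 2)⁻¹
  have ha : a ∈ Ioc 0 1 := ⟨by positivity, (inv_le_sinInvRoot hn0 (y := 0)).trans (hroot_le_one 0)⟩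
  let φ : sineCurve → ℝ := fun x => max (x : ℝ × ℝ).1 (sinInvRoot n (x : ℝ × ℝ).2)
  let u : ℝ → ℝ := fun t => projIcc a 1 ha.2 t
  have hu (t : ℝ) : u t ∈ Ioc 0 1 :=
    ⟨ha.1.trans_le (projIcc a 1 ha.2 t).2.1, (projIcc a 1 ha.2 t).2.2⟩
  let ψ : ℝ → sineCurve := fun t => ⟨_, mk_sin_one_div_mem_sineCurve (hu t)⟩
  refine ⟨φ, ψ, ?_, ?_, fun ⟨p, hp⟩ => ?_⟩
  · exact (continuous_fst.comp continuous_subtype_val).max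
      ((continuous_sinInvRoot hn0).comp (continuous_snd.comp continuous_subtype_val))
  · have hu' : Continuous u := continuous_subtype_val.comp continuous_projIcc
    exact (hu'.prodMk <| continuous_sin.comp <|
      continuous_const.div hu' fun t => (hu t).1.ne').subtype_mk _
  · have hφ : φ ⟨p, hp⟩ ∈ Icc a 1 :=
      ⟨(inv_le_sinInvRoot hn0).trans (le_max_right _ _),
        max_le (fst_le_one_of_mem_sineCurve hp) (hroot_le_one _)⟩
    have hψ : u (φ ⟨p, hp⟩) = φ ⟨p, hp⟩ := by simp only [u, projIcc_of_mem _ hφ]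
    rw [Subtype.dist_eq]
    change dist (u (φ ⟨p, hp⟩), sin (1 / u (φ ⟨p, hp⟩))) p < η
    rw [hψ]
    exact (dist_mk_max_le_of_mem_sineCurve hp (sinInvRoot_pos hn0)
      (sin_one_div_sinInvRoot (snd_mem_Icc_of_mem_sineCurve hp))).trans_lt
      ((sinInvRoot_le_inv hn0).trans_lt (inv_lt_of_inv_lt₀ hη hn))

/-- The topologist's sine curve pointed at `x₀ = (0, −1)`, an endpoint of the limit
segment, is not a PAANR, even though the underlying space is an AANR. -/
theorem sineCurve_not_isPAANR_limitPoint :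
    ¬ IsPAANR ↥sineCurve sineCurveLimitPoint ∧ IsAANR ↥sineCurve :=
  ⟨sineCurve_not_isPAANR, isAANR_sineCurve⟩
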